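/- arXiv:2503.23976 — 2 statements merged into one kernel-verified Lean document; each statement's English description precedes it below -/
import Mathlib

section
/- Let A be an essential real arrangement, C an unbounded chamber, and C^∨ its opposite chamber with respect to X(C) = ⟨C̄ ∩ H̄_∞⟩. Then Sep(C, C^∨) = {H ∈ A : H̄ ⊅ X(C)}; in particular if dim X(C) = ℓ − 1 then Sep(C, C^∨) = A, i.e., every hyperplane of A separates C from C^∨. -/
/-! The chamber of `x₀` is the open polyhedron `{y | σᵢ (aᵢ y - bᵢ) > 0}` with `σᵢ = aᵢ x₀ - bᵢ`,
and its recession cone is `K = {d | σᵢ aᵢ d ≥ 0}`. Adding up one witness for each functional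
that does not vanish on `K` gives a direction `w` with `σᵢ aᵢ w > 0` for exactly those `i`; such a
`w` lies in the relative interior of `K`, and unboundedness lets us take it nonzero. Moving from
`x₀` along `t • w` with `t → -∞` therefore crosses exactly the hyperplanes not containing `K`, and
since signs are constant on the connected chambers, these are the hyperplanes separating `C`
from `C^∨`. -/

open Filter Set Submodule LinearMap

section Algebraic

variable {V : Type*} [AddCommGroup V] [Module ℝ V] {ι : Type*}

def recessionCone (s : Set V) : Set V :=
  {d | ∀ x ∈ s, ∀ t : ℝ, 0 ≤ t → x + t • d ∈ s}

def openPolyhedron (g : ι → V →ₗ[ℝ] ℝ) (c : ι → ℝ) : Set V :=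
  {y | ∀ i, c i < g i y}

def polyhedralCone (g : ι → V →ₗ[ℝ] ℝ) : Set V :=
  {d | ∀ i, 0 ≤ g i d}

theorem convex_openPolyhedron (g : ι → V →ₗ[ℝ] ℝ) (c : ι → ℝ) :
    Convex ℝ (openPolyhedron g c) := by
  simpa only [openPolyhedron, ofPred_forall] using
    convex_iInter fun i => convex_halfSpace_gt (g i).isLinear (c i)

theorem recessionCone_openPolyhedron {g : ι → V →ₗ[ℝ] ℝ} {c : ι → ℝ}
    (h : (openPolyhedron g c).Nonempty) :
    recessionCone (openPolyhedron g c) = polyhedralCone g := by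
  obtain ⟨x, hx⟩ := h
  ext d
  simp only [recessionCone, openPolyhedron, polyhedralCone, mem_ofPred_eq, map_add, map_smul,
    smul_eq_mul]
  constructor
  · intro hd i
    by_contra! hneg
    -- at this time the ray from `x` reaches the hyperplane `g i = c i`
    have ht : (g i x - c i) / -g i d * g i d = -(g i x - c i) := by
      rw [div_neg, neg_mul, div_mul_cancel₀ _ hneg.ne]
    have := hd x hx _ (div_nonneg (sub_nonneg.2 (hx i).le) (neg_nonneg.2 hneg.le)) i
    linarith
  · intro hd y hy t ht i
    linarith [hy i, mul_nonneg ht (hd i)]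

theorem exists_mem_polyhedralCone_forall_pos [Fintype ι] (g : ι → V →ₗ[ℝ] ℝ) :
    ∃ w ∈ polyhedralCone g,
      ∀ i, ¬ span ℝ (polyhedralCone g) ≤ ker (g i) → 0 < g i w := by
  set K := polyhedralCone g
  have hwitness : ∀ j, ∃ v ∈ K, ¬ span ℝ K ≤ ker (g j) → 0 < g j v := by
    intro j
    by_cases hj : span ℝ K ≤ ker (g j)
    · exact ⟨0, fun i => by simp, fun h => absurd hj h⟩
    · obtain ⟨v, hvK, hv⟩ : ∃ v ∈ K, g j v ≠ 0 := by
        simpa [span_le, subset_def] using hj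
      exact ⟨v, hvK, fun _ => (hvK j).lt_of_ne' hv⟩
  choose e heK hepos using hwitness
  refine ⟨∑ j, e j, fun i => ?_, fun i hi => ?_⟩
  · rw [map_sum]
    exact Finset.sum_nonneg fun j _ => heK j i
  · rw [map_sum]
    exact Finset.sum_pos' (fun j _ => heK j i) ⟨i, Finset.mem_univ i, hepos i hi⟩

theorem exists_ne_zero_mem_polyhedralCone_forall_pos [Fintype ι] {g : ι → V →ₗ[ℝ] ℝ} {d₀ : V}
    (hd₀K : d₀ ∈ polyhedralCone g) (hd₀ : d₀ ≠ 0) :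
    ∃ w ∈ polyhedralCone g, w ≠ 0 ∧
      ∀ i, ¬ span ℝ (polyhedralCone g) ≤ ker (g i) → 0 < g i w := by
  obtain ⟨w, hwK, hwpos⟩ := exists_mem_polyhedralCone_forall_pos g
  by_cases hw : w = 0
  · exact ⟨d₀, hd₀K, hd₀, fun i hi => absurd (hwpos i hi) (by simp [hw])⟩
  · exact ⟨w, hwK, hw, hwpos⟩

theorem eventually_atBot_mul_neg {f : V →ₗ[ℝ] ℝ} {b : ℝ} {x w : V}
    (hw : 0 < (f x - b) * f w) :
    ∀ᶠ t : ℝ in atBot, (f x - b) * (f (x + t • w) - b) < 0 := by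
  have hexpand : ∀ t : ℝ,
      (f x - b) * (f (x + t • w) - b) = (f x - b) * (f x - b) + t * ((f x - b) * f w) := by
    intro t
    simp only [map_add, map_smul, smul_eq_mul]
    ring
  simp_rw [hexpand]
  exact (tendsto_atBot_add_const_left _ _ (tendsto_id.atBot_mul_const hw)).eventually_lt_atBot 0

theorem not_separates_of_map_eq_zero {f : V →ₗ[ℝ] ℝ} {b : ℝ} {C D : Set V} {x₀ w : V} {t : ℝ}
    (hx₀ : x₀ ∈ C) (ht : x₀ + t • w ∈ D) (hw : f w = 0) :
    ¬ ∀ x ∈ C, ∀ y ∈ D, (f x - b) * (f y - b) < 0 := fun h => by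
  have := h x₀ hx₀ _ ht
  rw [map_add, map_smul, hw, smul_zero, add_zero] at this
  exact (mul_self_nonneg _).not_gt this

end Algebraic

section Preconnected

variable {X : Type*} [TopologicalSpace X] {s t : Set X} {f : X → ℝ}

theorem IsPreconnected.mul_pos_of_ne_zero (hs : IsPreconnected s) (hf : ContinuousOn f s)
    (h0 : ∀ x ∈ s, f x ≠ 0) {x y : X} (hx : x ∈ s) (hy : y ∈ s) : 0 < f x * f y := by
  rcases (h0 x hx).lt_or_gt with hfx | hfx <;> rcases (h0 y hy).lt_or_gt with hfy | hfy
  · exact mul_pos_of_neg_of_neg hfx hfy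
  · obtain ⟨z, hz, hfz⟩ := hs.intermediate_value hx hy hf ⟨hfx.le, hfy.le⟩
    exact absurd hfz (h0 z hz)
  · obtain ⟨z, hz, hfz⟩ := hs.intermediate_value hy hx hf ⟨hfy.le, hfx.le⟩
    exact absurd hfz (h0 z hz)
  · exact mul_pos hfx hfy

theorem IsPreconnected.mul_neg_of_mul_neg (hs : IsPreconnected s) (ht : IsPreconnected t)
    (hf : Continuous f) (hs0 : ∀ x ∈ s, f x ≠ 0) (ht0 : ∀ y ∈ t, f y ≠ 0)
    {x₀ x y₀ y : X} (hx₀ : x₀ ∈ s) (hx : x ∈ s) (hy₀ : y₀ ∈ t) (hy : y ∈ t)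
    (h : f x₀ * f y₀ < 0) : f x * f y < 0 := by
  have hpos := mul_pos (hs.mul_pos_of_ne_zero hf.continuousOn hs0 hx₀ hx)
    (ht.mul_pos_of_ne_zero hf.continuousOn ht0 hy₀ hy)
  rw [show f x₀ * f x * (f y₀ * f y) = f x₀ * f y₀ * (f x * f y) by ring] at hpos
  exact neg_of_mul_pos_right hpos h.le

end Preconnected

section FiniteDimensional

variable {E : Type*} [NormedAddCommGroup E] [NormedSpace ℝ E] [FiniteDimensional ℝ E]
  {ι : Type*}

theorem connectedComponentIn_eq_openPolyhedron {a : ι → E →ₗ[ℝ] ℝ} {b : ι → ℝ} {x₀ : E}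
    (hx₀ : ∀ i, a i x₀ ≠ b i) :
    connectedComponentIn {x | ∀ i, a i x ≠ b i} x₀ =
      openPolyhedron (fun i => (a i x₀ - b i) • a i) (fun i => (a i x₀ - b i) * b i) := by
  have hmem : ∀ y, y ∈ openPolyhedron (fun i => (a i x₀ - b i) • a i)
      (fun i => (a i x₀ - b i) * b i) ↔ ∀ i, 0 < (a i x₀ - b i) * (a i y - b i) := by
    intro y
    simp only [openPolyhedron, mem_ofPred_eq, LinearMap.smul_apply, smul_eq_mul, mul_sub, sub_pos]
  set Ω : Set E := {x | ∀ i, a i x ≠ b i}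
  apply Subset.antisymm
  · intro y hy
    exact (hmem y).2 fun i => isPreconnected_connectedComponentIn.mul_pos_of_ne_zero
      ((a i).continuous_of_finiteDimensional.sub continuous_const).continuousOn
      (fun z hz => sub_ne_zero.2 (connectedComponentIn_subset Ω x₀ hz i))
      (mem_connectedComponentIn (F := Ω) hx₀) hy
  · refine (convex_openPolyhedron _ _).isPreconnected.subset_connectedComponentIn
      ((hmem x₀).2 fun i => mul_self_pos.2 (sub_ne_zero.2 (hx₀ i))) fun y hy i hyi => ?_
    have := (hmem y).1 hy i
    rw [hyi, sub_self, mul_zero] at this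
    exact this.false

theorem exists_ne_zero_forall_nonneg_of_not_isBounded {s : Set E}
    (hs : ¬ Bornology.IsBounded s) :
    ∃ d ≠ (0 : E), ∀ f : E →ₗ[ℝ] ℝ, BddBelow (f '' s) → 0 ≤ f d := by
  have hX : ∀ k : ℕ, ∃ x ∈ s, (k : ℝ) < ‖x‖ := by
    intro k
    by_contra! h
    exact hs (isBounded_iff_forall_norm_le.2 ⟨k, h⟩)
  choose X hXs hXk using hX
  have hXpos : ∀ k, 0 < ‖X k‖ := fun k => (Nat.cast_nonneg k).trans_lt (hXk k)
  have hu : ∀ k, ‖X k‖⁻¹ • X k ∈ Metric.sphere (0 : E) 1 := fun k => by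
    rw [mem_sphere_zero_iff_norm, norm_smul, norm_inv, norm_norm, inv_mul_cancel₀ (hXpos k).ne']
  -- a limit direction of `X k / ‖X k‖` is the recession direction
  obtain ⟨d, hd, φ, hφ, hlim⟩ := (isCompact_sphere (0 : E) 1).tendsto_subseq hu
  refine ⟨d, ne_zero_of_mem_unit_sphere ⟨d, hd⟩, fun f ⟨m, hm⟩ => ?_⟩
  have hnorm : Tendsto (fun k => ‖X (φ k)‖) atTop atTop :=
    tendsto_atTop_mono (fun k => (hXk (φ k)).le)
      (tendsto_natCast_atTop_atTop.comp hφ.tendsto_atTop)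
  have hlow : Tendsto (fun k => ‖X (φ k)‖⁻¹ * m) atTop (nhds 0) := by
    simpa using hnorm.inv_tendsto_atTop.mul_const m
  refine le_of_tendsto_of_tendsto' hlow ((f.continuous_of_finiteDimensional.tendsto d).comp hlim)
    fun k => ?_
  simp only [Function.comp_apply, map_smul, smul_eq_mul]
  exact mul_le_mul_of_nonneg_left (hm ⟨X (φ k), hXs _, rfl⟩) (inv_nonneg.2 (hXpos _).le)

theorem exists_ne_zero_mem_polyhedralCone_of_not_isBounded {g : ι → E →ₗ[ℝ] ℝ} {c : ι → ℝ}
    (h : ¬ Bornology.IsBounded (openPolyhedron g c)) : ∃ d ≠ (0 : E), d ∈ polyhedralCone g := by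
  obtain ⟨d, hd, hf⟩ := exists_ne_zero_forall_nonneg_of_not_isBounded h
  exact ⟨d, hd, fun i => hf (g i) ⟨c i, by rintro _ ⟨y, hy, rfl⟩; exact (hy i).le⟩⟩

theorem mem_intrinsicInterior_polyhedralCone [Finite ι] {g : ι → E →ₗ[ℝ] ℝ} {w : E}
    (hw : w ∈ polyhedralCone g)
    (hpos : ∀ i, ¬ span ℝ (polyhedralCone g) ≤ ker (g i) → 0 < g i w) :
    w ∈ intrinsicInterior ℝ (polyhedralCone g) := by
  set K := polyhedralCone g
  set U : Set E := {v | ∀ i, ¬ span ℝ K ≤ ker (g i) → 0 < g i v}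
  have hU : IsOpen U := by
    simp only [U, ofPred_forall]
    exact isOpen_iInter_of_finite fun i => isOpen_iInter_of_finite fun _ =>
      isOpen_lt continuous_const (g i).continuous_of_finiteDimensional
  -- inside the affine span, the functionals vanishing on `K` impose no constraint
  have hUK : ((↑) ⁻¹' U : Set (affineSpan ℝ K)) ⊆ (↑) ⁻¹' K := by
    rintro ⟨v, hv⟩ hvU i
    by_cases hi : span ℝ K ≤ ker (g i)
    · exact (hi (affineSpan_le_toAffineSubspace_span hv)).ge
    · exact (hvU i hi).le
  exact ⟨⟨w, subset_affineSpan ℝ K hw⟩,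
    interior_maximal hUK (hU.preimage continuous_subtype_val) hpos, rfl⟩

theorem separates_of_pos {f : E →ₗ[ℝ] ℝ} {b : ℝ} {C D : Set E}
    (hC : IsPreconnected C) (hD : IsPreconnected D)
    (hCb : ∀ x ∈ C, f x ≠ b) (hDb : ∀ y ∈ D, f y ≠ b) {x₀ w : E} (hx₀ : x₀ ∈ C)
    (hw : ∀ᶠ t : ℝ in atBot, x₀ + t • w ∈ D) (hpos : 0 < (f x₀ - b) * f w) :
    ∀ x ∈ C, ∀ y ∈ D, (f x - b) * (f y - b) < 0 := by
  obtain ⟨t, htD, hneg⟩ := (hw.and (eventually_atBot_mul_neg hpos)).exists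
  intro x hx y hy
  exact hC.mul_neg_of_mul_neg hD (f.continuous_of_finiteDimensional.sub continuous_const)
    (fun z hz => sub_ne_zero.2 (hCb z hz)) (fun z hz => sub_ne_zero.2 (hDb z hz))
    hx₀ hx htD hy hneg

end FiniteDimensional

theorem stmt11 (ℓ n : ℕ)
    (a : Fin n → ((Fin ℓ → ℝ) →ₗ[ℝ] ℝ)) (b : Fin n → ℝ)
    (ha : ∀ i, a i ≠ 0)
    (Ω : Set (Fin ℓ → ℝ)) (hΩ : Ω = {x | ∀ i, a i x ≠ b i})
    (C D : Set (Fin ℓ → ℝ))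
    (hC : ∃ x ∈ Ω, C = connectedComponentIn Ω x)
    (hD : ∃ x ∈ Ω, D = connectedComponentIn Ω x)
    (hunb : ¬ Bornology.IsBounded C)
    (recC : Set (Fin ℓ → ℝ))
    (hrec : recC = {d | ∀ x ∈ C, ∀ t : ℝ, 0 ≤ t → x + t • d ∈ C})
    (hopp : ∀ x ∈ C, ∀ d ∈ intrinsicInterior ℝ recC, d ≠ 0 →
      ∀ᶠ t : ℝ in Filter.atBot, x + t • d ∈ D) :
    {i : Fin n | ∀ x ∈ C, ∀ y ∈ D, (a i x - b i) * (a i y - b i) < 0}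
      = {i : Fin n | ¬ Submodule.span ℝ recC ≤ LinearMap.ker (a i)} ∧
    (Submodule.span ℝ recC = ⊤ →
      {i : Fin n | ∀ x ∈ C, ∀ y ∈ D, (a i x - b i) * (a i y - b i) < 0} = Set.univ) := by
  subst hΩ
  obtain ⟨x₀, hx₀, rfl⟩ := hC
  obtain ⟨y₀, -, rfl⟩ := hD
  set g : Fin n → (Fin ℓ → ℝ) →ₗ[ℝ] ℝ := fun i => (a i x₀ - b i) • a i
  have hCP := connectedComponentIn_eq_openPolyhedron hx₀
  have hx₀C := mem_connectedComponentIn hx₀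
  have hK : recC = polyhedralCone g := by
    rw [hrec]
    exact (congrArg recessionCone hCP).trans (recessionCone_openPolyhedron ⟨x₀, hCP ▸ hx₀C⟩)
  obtain ⟨d₀, hd₀, hd₀K⟩ := exists_ne_zero_mem_polyhedralCone_of_not_isBounded (hCP ▸ hunb)
  obtain ⟨w, hwK, hw0, hwpos⟩ := exists_ne_zero_mem_polyhedralCone_forall_pos hd₀K hd₀
  have hwD := hopp x₀ hx₀C w (hK ▸ mem_intrinsicInterior_polyhedralCone hwK hwpos) hw0
  obtain ⟨t, ht⟩ := hwD.exists
  have hsep : ∀ i, (∀ x ∈ connectedComponentIn _ x₀, ∀ y ∈ connectedComponentIn _ y₀,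
      (a i x - b i) * (a i y - b i) < 0) ↔ ¬ span ℝ recC ≤ ker (a i) := fun i =>
    ⟨fun hsep hle => not_separates_of_map_eq_zero hx₀C ht (hle (subset_span (hK ▸ hwK))) hsep,
      fun hi => separates_of_pos isPreconnected_connectedComponentIn
        isPreconnected_connectedComponentIn (fun z hz => connectedComponentIn_subset _ _ hz i)
        (fun z hz => connectedComponentIn_subset _ _ hz i) hx₀C hwD
        (hwpos i (by rwa [ker_smul _ _ (sub_ne_zero.2 (hx₀ i)), ← hK]))⟩
  refine ⟨Set.ext hsep, fun htop => eq_univ_of_forall fun i => (hsep i).2 ?_⟩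
  rw [htop, top_le_iff, ker_eq_top]
  exact ha i
end

section
/- Taking the opposite chamber C ↦ C^∨ with respect to X(C) = ⟨C̄ ∩ H̄_∞⟩ is an involution on the set of unbounded chambers of a real arrangement: (C^∨)^∨ = C for all unbounded chambers C. -/
/-!
A chamber is cut out by sign conditions `0 < s i * (a i z - b i)`, and its recession cone is
`{v | ∀ i, 0 ≤ s i * a i v}`. As `C` is unbounded, its cone has a nonzero relative-interior
direction `d₀`. Walking from a point of `C` along `-d₀` ends in `D`, so the signs of `D` agree
with those of `C` on the hyperplanes parallel to `d₀` and are opposite on all others. Hence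
`-d₀` lies in the cone of `D`, and a relative-interior direction `e` of that cone crosses every
hyperplane not parallel to `d₀` towards `D`; since `e + τ • d₀` lies in the cone of `C` for
large `τ`, `e` is parallel to all hyperplanes parallel to `d₀`. So walking from `D` along `-e`
ends in `C`.
-/

open Set Filter Topology

theorem nonneg_of_forall_nonneg_pos_add_mul {α β : ℝ} (h : ∀ t : ℝ, 0 ≤ t → 0 < α + t * β) :
    0 ≤ β := by
  by_contra! hβ
  have hα := h 0 le_rfl
  have : α / -β * β = -α := by field_simp [hβ.ne]
  linarith [h (α / -β) (div_nonneg (by linarith) (by linarith))]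

theorem eventually_atBot_pos_add_mul_iff {α β : ℝ} :
    (∀ᶠ t : ℝ in atBot, 0 < α + t * β) ↔ β < 0 ∨ (β = 0 ∧ 0 < α) := by
  constructor
  · intro h
    rcases lt_trichotomy β 0 with hβ | rfl | hβ
    · exact .inl hβ
    · exact .inr ⟨rfl, by simpa using h.exists⟩
    · have hlim := tendsto_atBot_add_const_left _ α (tendsto_id.atBot_mul_const hβ)
      obtain ⟨t, ht, ht'⟩ := (h.and (hlim.eventually_le_atBot 0)).exists
      exact absurd ht' (not_le.2 ht)
  · rintro (hβ | ⟨rfl, hα⟩)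
    · exact (tendsto_atTop_add_const_left _ α
        (tendsto_id.atBot_mul_const_of_neg hβ)).eventually_gt_atTop 0
    · simp [hα]

theorem eventually_atTop_nonneg_add_mul {α β : ℝ} (hβ : 0 ≤ β) (hα : β = 0 → 0 ≤ α) :
    ∀ᶠ t : ℝ in atTop, 0 ≤ α + t * β := by
  rcases hβ.eq_or_lt with rfl | hβ
  · simp [hα rfl]
  · exact (tendsto_atTop_add_const_left _ α
      (tendsto_id.atTop_mul_const hβ)).eventually_ge_atTop 0

theorem exists_ne_zero_forall_nonneg_of_not_isBounded_s18 {E : Type*} [NormedAddCommGroup E]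
    [NormedSpace ℝ E] [FiniteDimensional ℝ E] {C : Set E} (hC : ¬ Bornology.IsBounded C) :
    ∃ d : E, d ≠ 0 ∧ ∀ (φ : E →ₗ[ℝ] ℝ) (c : ℝ), (∀ z ∈ C, c ≤ φ z) → 0 ≤ φ d := by
  rw [isBounded_iff_forall_norm_le] at hC
  push Not at hC
  choose x hxC hx using hC
  have hx0 : ∀ r : ℝ, 0 ≤ r → x r ≠ 0 := fun r hr h => by simpa [h] using hr.trans_lt (hx r)
  have hnorm : Tendsto (fun k : ℕ => ‖x k‖) atTop atTop :=
    tendsto_atTop_mono (fun k => (hx k).le) tendsto_natCast_atTop_atTop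
  have hsph : ∀ k : ℕ, ‖x k‖⁻¹ • x k ∈ Metric.sphere (0 : E) 1 := fun k => by
    simpa using norm_smul_inv_norm (𝕜 := ℝ) (hx0 k k.cast_nonneg)
  obtain ⟨d, hd, ψ, hψ, hlim⟩ := (isCompact_sphere (0 : E) 1).tendsto_subseq hsph
  refine ⟨d, ne_zero_of_mem_sphere one_ne_zero ⟨d, hd⟩, fun φ c hφ => ?_⟩
  have hφlim := (φ.continuous_of_finiteDimensional.tendsto d).comp hlim
  have hbound : Tendsto (fun k => ‖x (ψ k)‖⁻¹ * c) atTop (𝓝 0) := by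
    simpa using ((hnorm.comp hψ.tendsto_atTop).inv_tendsto_atTop).mul_const c
  refine le_of_tendsto_of_tendsto' hbound hφlim fun k => ?_
  simp only [Function.comp_apply, map_smul, smul_eq_mul]
  exact mul_le_mul_of_nonneg_left (hφ _ (hxC _)) (inv_nonneg.2 (norm_nonneg _))

theorem neg_mem_direction_affineSpan {V : Type*} [AddCommGroup V] [Module ℝ V] {K : Set V}
    {v : V} (h0 : (0 : V) ∈ K) (hv : v ∈ K) : -v ∈ (affineSpan ℝ K).direction := by
  simpa using AffineSubspace.vsub_mem_direction (subset_affineSpan ℝ K h0)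
    (subset_affineSpan ℝ K hv)

section IntrinsicInterior

variable {V : Type*} [AddCommGroup V] [Module ℝ V] [TopologicalSpace V]
  [IsTopologicalAddGroup V] [ContinuousSMul ℝ V] {K : Set V} {e v : V}

theorem eventually_add_smul_mem_intrinsicInterior (he : e ∈ intrinsicInterior ℝ K)
    (hv : v ∈ (affineSpan ℝ K).direction) :
    ∀ᶠ δ : ℝ in 𝓝 0, e + δ • v ∈ intrinsicInterior ℝ K := by
  obtain ⟨e', he', rfl⟩ := mem_intrinsicInterior.1 he
  let g : ℝ → affineSpan ℝ K := fun δ =>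
    ⟨δ • v + e', AffineSubspace.vadd_mem_of_mem_direction (Submodule.smul_mem _ δ hv) e'.2⟩
  have hg : Continuous g := by fun_prop
  have hg0 : g 0 = e' := by ext; simp [g]
  filter_upwards [hg.continuousAt.preimage_mem_nhds (hg0 ▸ isOpen_interior.mem_nhds he')]
    with δ hδ
  exact mem_intrinsicInterior.2 ⟨g δ, hδ, add_comm _ _⟩

theorem exists_pos_add_smul_mem_intrinsicInterior (he : e ∈ intrinsicInterior ℝ K)
    (hv : v ∈ (affineSpan ℝ K).direction) :
    ∃ δ : ℝ, 0 < δ ∧ e + δ • v ∈ intrinsicInterior ℝ K :=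
  ((eventually_add_smul_mem_intrinsicInterior he hv).filter_mono nhdsWithin_le_nhds
    |>.and (self_mem_nhdsWithin (s := Ioi (0 : ℝ)))).exists.imp fun _ => And.symm

theorem LinearMap.eq_zero_of_nonneg_of_mem_intrinsicInterior {φ : V →ₗ[ℝ] ℝ}
    (hφ : ∀ w ∈ K, 0 ≤ φ w) (he : e ∈ intrinsicInterior ℝ K) (hφe : φ e = 0)
    (h0 : (0 : V) ∈ K) (hv : v ∈ K) : φ v = 0 := by
  obtain ⟨δ, hδ, hmem⟩ := exists_pos_add_smul_mem_intrinsicInterior he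
    (neg_mem_direction_affineSpan h0 hv)
  have := hφ _ (intrinsicInterior_subset hmem)
  simp only [map_add, map_smul, map_neg, hφe, smul_eq_mul] at this
  nlinarith [hφ v hv]

end IntrinsicInterior

theorem exists_ne_zero_mem_intrinsicInterior {V : Type*} [NormedAddCommGroup V] [NormedSpace ℝ V]
    [FiniteDimensional ℝ V] {K : Set V} (hK : Convex ℝ K) (h0 : (0 : V) ∈ K) {v : V}
    (hv : v ∈ K) (hv0 : v ≠ 0) : ∃ d ∈ intrinsicInterior ℝ K, d ≠ 0 := by
  obtain ⟨e, he⟩ := Set.Nonempty.intrinsicInterior hK ⟨0, h0⟩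
  rcases ne_or_eq e 0 with he0 | rfl
  · exact ⟨e, he, he0⟩
  obtain ⟨δ, hδ, hmem⟩ := exists_pos_add_smul_mem_intrinsicInterior he
    (neg_mem_direction_affineSpan h0 hv)
  exact ⟨_, hmem, by simp [hδ.ne', hv0]⟩

namespace AffineArrangement

variable {E ι : Type*} [AddCommGroup E] [Module ℝ E] (a : ι → E →ₗ[ℝ] ℝ) (b : ι → ℝ)

/-- Only the signs of the `s i` matter: the chamber containing `p` is
`chamber a b (fun i => a i p - b i)`. -/
def chamber (s : ι → ℝ) : Set E := {z | ∀ i, 0 < s i * (a i z - b i)}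

def chamberCone (s : ι → ℝ) : Set E := {v | ∀ i, 0 ≤ s i * a i v}

variable {a b}

theorem mul_apply_add_smul_sub (s : ℝ) (f : E →ₗ[ℝ] ℝ) (c : ℝ) (x d : E) (t : ℝ) :
    s * (f (x + t • d) - c) = s * (f x - c) + t * (s * f d) := by
  simp only [map_add, map_smul, smul_eq_mul]
  ring

theorem mem_chamber_self {p : E} (hp : ∀ i, a i p ≠ b i) :
    p ∈ chamber a b (fun i => a i p - b i) :=
  fun i => mul_self_pos.2 (sub_ne_zero.2 (hp i))

theorem convex_chamber (s : ι → ℝ) : Convex ℝ (chamber a b s) := by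
  intro x hx y hy θ φ hθ hφ hθφ i
  have key : s i * (a i (θ • x + φ • y) - b i)
      = θ * (s i * (a i x - b i)) + φ * (s i * (a i y - b i)) := by
    simp only [map_add, map_smul, smul_eq_mul]
    linear_combination (s i * b i) * hθφ
  rw [key]
  rcases hθ.eq_or_lt with rfl | hθ
  · simpa [show φ = 1 by simpa using hθφ] using hy i
  · exact add_pos_of_pos_of_nonneg (mul_pos hθ (hx i)) (mul_nonneg hφ (hy i).le)

theorem convex_chamberCone (s : ι → ℝ) : Convex ℝ (chamberCone a s) := by
  intro x hx y hy θ φ hθ hφ _ i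
  simp only [map_add, map_smul, smul_eq_mul]
  nlinarith [mul_nonneg hθ (hx i), mul_nonneg hφ (hy i)]

theorem zero_mem_chamberCone (s : ι → ℝ) : (0 : E) ∈ chamberCone a s := by
  simp [chamberCone]

theorem connectedComponentIn_eq_chamber [TopologicalSpace E] [IsTopologicalAddGroup E]
    [ContinuousSMul ℝ E] (ha : ∀ i, Continuous (a i)) {p : E} (hp : ∀ i, a i p ≠ b i) :
    connectedComponentIn {x | ∀ i, a i x ≠ b i} p = chamber a b (fun i => a i p - b i) := by
  refine subset_antisymm (fun z hz i => ?_) <|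
    (convex_chamber _).isPreconnected.subset_connectedComponentIn (mem_chamber_self hp)
      fun z hz i h => by simpa [h] using hz i
  set f := fun w => a i w - b i
  have hI : (f '' connectedComponentIn {x | ∀ i, a i x ≠ b i} p).OrdConnected :=
    (isPreconnected_connectedComponentIn.image f
      ((ha i).sub continuous_const).continuousOn).ordConnected
  by_contra! hpz
  have h0 : (0 : ℝ) ∈ uIcc (f p) (f z) :=
    mem_uIcc.2 ((mul_nonpos_iff.1 hpz).symm.imp id And.symm)
  obtain ⟨w, hw, hw0⟩ := hI.uIcc_subset ⟨p, mem_connectedComponentIn hp, rfl⟩ ⟨z, hz, rfl⟩ h0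
  exact connectedComponentIn_subset _ _ hw i (sub_eq_zero.1 hw0)

theorem recessionCone_chamber {s : ι → ℝ} (hC : (chamber a b s).Nonempty) :
    {d | ∀ x ∈ chamber a b s, ∀ t : ℝ, 0 ≤ t → x + t • d ∈ chamber a b s} = chamberCone a s := by
  ext d
  refine ⟨fun hd i => ?_, fun hd x hx t ht i => ?_⟩
  · obtain ⟨p, hp⟩ := hC
    exact nonneg_of_forall_nonneg_pos_add_mul fun t ht => by
      simpa only [mul_apply_add_smul_sub] using hd p hp t ht i
  · rw [mul_apply_add_smul_sub]
    exact add_pos_of_pos_of_nonneg (hx i) (mul_nonneg ht (hd i))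

theorem exists_ne_zero_mem_chamberCone_of_not_isBounded {F : Type*} [NormedAddCommGroup F]
    [NormedSpace ℝ F] [FiniteDimensional ℝ F] {a : ι → F →ₗ[ℝ] ℝ} {s : ι → ℝ}
    (hC : ¬ Bornology.IsBounded (chamber a b s)) : ∃ v ∈ chamberCone a s, v ≠ 0 := by
  obtain ⟨d, hd0, hd⟩ := exists_ne_zero_forall_nonneg_of_not_isBounded_s18 hC
  refine ⟨d, fun i => ?_, hd0⟩
  simpa using hd (s i • a i) (s i * b i) fun z hz => by
    simpa [mul_sub, sub_pos] using (hz i).le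

theorem eventually_atBot_add_smul_mem_chamber_iff [Finite ι] {s : ι → ℝ} {x d : E} :
    (∀ᶠ t : ℝ in atBot, x + t • d ∈ chamber a b s) ↔
      ∀ i, s i * a i d < 0 ∨ (s i * a i d = 0 ∧ 0 < s i * (a i x - b i)) := by
  simp only [chamber, mem_ofPred_eq, eventually_all, mul_apply_add_smul_sub,
    eventually_atBot_pos_add_mul_iff]

theorem apply_eq_zero_of_mem_intrinsicInterior_chamberCone [TopologicalSpace E]
    [IsTopologicalAddGroup E] [ContinuousSMul ℝ E] {s : ι → ℝ} {d v : E} {i : ι}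
    (hs : s i ≠ 0) (hd : d ∈ intrinsicInterior ℝ (chamberCone a s)) (hdi : a i d = 0)
    (hv : v ∈ chamberCone a s) : a i v = 0 := by
  have := (s i • a i).eq_zero_of_nonneg_of_mem_intrinsicInterior (K := chamberCone a s)
    (fun w hw => hw i) hd (by simp [hdi]) (zero_mem_chamberCone s) hv
  simpa [hs] using this

section Opposite

variable [TopologicalSpace E] [IsTopologicalAddGroup E] [ContinuousSMul ℝ E] [Finite ι]
  {s u : ι → ℝ}

-- `e + τ • d₀` lies in the cone for large `τ`, and `d₀` is in its relative interior.
theorem apply_eq_zero_of_mem_intrinsicInterior_chamberCone_of_nonneg (hs : ∀ i, s i ≠ 0)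
    {d₀ e : E} (hd₀ : d₀ ∈ intrinsicInterior ℝ (chamberCone a s))
    (he : ∀ j, a j d₀ = 0 → 0 ≤ s j * a j e) {i : ι} (hi : a i d₀ = 0) : a i e = 0 := by
  have hd₀s : d₀ ∈ chamberCone a s := intrinsicInterior_subset hd₀
  have : ∀ᶠ τ : ℝ in atTop, e + τ • d₀ ∈ chamberCone a s := by
    simp only [chamberCone, mem_ofPred_eq, eventually_all, map_add, map_smul, smul_eq_mul,
      mul_add, mul_left_comm (s _)]
    exact fun j => eventually_atTop_nonneg_add_mul (hd₀s j) fun h =>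
      he j ((mul_eq_zero.1 h).resolve_left (hs j))
  obtain ⟨τ, hτ⟩ := this.exists
  simpa [hi] using apply_eq_zero_of_mem_intrinsicInterior_chamberCone (hs i) hd₀ hi hτ

theorem eventually_atBot_add_smul_mem_chamber_of_opposite (hs : ∀ i, s i ≠ 0)
    (hu : ∀ i, u i ≠ 0) {p d₀ : E} (hp : p ∈ chamber a b s)
    (hd₀ : d₀ ∈ intrinsicInterior ℝ (chamberCone a s))
    (hpd₀ : ∀ᶠ t : ℝ in atBot, p + t • d₀ ∈ chamber a b u)
    {y e : E} (hy : y ∈ chamber a b u) (he : e ∈ intrinsicInterior ℝ (chamberCone a u)) :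
    ∀ᶠ t : ℝ in atBot, y + t • e ∈ chamber a b s := by
  rw [eventually_atBot_add_smul_mem_chamber_iff] at hpd₀ ⊢
  have hd₀s : d₀ ∈ chamberCone a s := intrinsicInterior_subset hd₀
  have heu : e ∈ chamberCone a u := intrinsicInterior_subset he
  have hsame : ∀ i, a i d₀ = 0 → 0 < s i * u i := fun i hi => by
    rcases hpd₀ i with h | ⟨-, h⟩
    · simp [hi] at h
    · have hpi : 0 < s i * (a i p - b i) := hp i
      nlinarith [mul_pos hpi h, sq_nonneg (a i p - b i)]
  have hopp : ∀ i, a i d₀ ≠ 0 → 0 < s i * a i d₀ ∧ u i * a i d₀ < 0 := fun i hi =>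
    ⟨(hd₀s i).lt_of_ne' (mul_ne_zero (hs i) hi),
      (hpd₀ i).resolve_right fun h => mul_ne_zero (hu i) hi h.1⟩
  have hneg : -d₀ ∈ chamberCone a u := fun i => by
    by_cases hi : a i d₀ = 0
    · simp [hi]
    · simpa using (hopp i hi).2.le
  have he_pos : ∀ i, a i d₀ ≠ 0 → 0 < u i * a i e := fun i hi =>
    (heu i).lt_of_ne' fun h => hi <| by
      simpa using apply_eq_zero_of_mem_intrinsicInterior_chamberCone (hu i) he
        ((mul_eq_zero.1 h).resolve_left (hu i)) hneg
  have he_zero : ∀ i, a i d₀ = 0 → a i e = 0 :=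
    fun i => apply_eq_zero_of_mem_intrinsicInterior_chamberCone_of_nonneg hs hd₀ fun j hj => by
      refine nonneg_of_mul_nonneg_left ?_ (mul_self_pos.2 (hu j))
      convert mul_nonneg (hsame j hj).le (heu j) using 1
      ring
  intro i
  by_cases hi : a i d₀ = 0
  · have hyi : 0 < u i * (a i y - b i) := hy i
    exact .inr ⟨by simp [he_zero i hi],
      by nlinarith [mul_pos (hsame i hi) hyi, sq_nonneg (u i)]⟩
  · exact .inl (by nlinarith [hopp i hi, he_pos i hi])

end Opposite

end AffineArrangement

open AffineArrangement

theorem stmt18_general (ℓ n : ℕ)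
    (a : Fin n → ((Fin ℓ → ℝ) →ₗ[ℝ] ℝ)) (b : Fin n → ℝ)
    (Ω : Set (Fin ℓ → ℝ)) (hΩ : Ω = {x | ∀ i, a i x ≠ b i})
    (recCone : Set (Fin ℓ → ℝ) → Set (Fin ℓ → ℝ))
    (hrec : ∀ C, recCone C = {d | ∀ x ∈ C, ∀ t : ℝ, 0 ≤ t → x + t • d ∈ C})
    (Opp : Set (Fin ℓ → ℝ) → Set (Fin ℓ → ℝ) → Prop)
    (hOpp : ∀ C D, Opp C D ↔ ∀ x ∈ C, ∀ d ∈ intrinsicInterior ℝ (recCone C), d ≠ 0 →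
      ∀ᶠ t : ℝ in Filter.atBot, x + t • d ∈ D)
    (C D : Set (Fin ℓ → ℝ))
    (hC : ∃ x ∈ Ω, C = connectedComponentIn Ω x)
    (hD : ∃ x ∈ Ω, D = connectedComponentIn Ω x)
    (hunbC : ¬ Bornology.IsBounded C)
    (h : Opp C D) : Opp D C := by
  subst hΩ
  obtain ⟨p, hp, rfl⟩ := hC
  obtain ⟨q, hq, rfl⟩ := hD
  have ha : ∀ i, Continuous (a i) := fun i => (a i).continuous_of_finiteDimensional
  rw [connectedComponentIn_eq_chamber ha hp] at hunbC h ⊢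
  rw [connectedComponentIn_eq_chamber ha hq] at h ⊢
  have hs : ∀ i, a i p - b i ≠ 0 := fun i => sub_ne_zero.2 (hp i)
  have hu : ∀ i, a i q - b i ≠ 0 := fun i => sub_ne_zero.2 (hq i)
  rw [hOpp, hrec, recessionCone_chamber ⟨p, mem_chamber_self hp⟩] at h
  rw [hOpp, hrec, recessionCone_chamber ⟨q, mem_chamber_self hq⟩]
  obtain ⟨v, hv, hv0⟩ := exists_ne_zero_mem_chamberCone_of_not_isBounded hunbC
  obtain ⟨d₀, hd₀, hd₀0⟩ :=
    exists_ne_zero_mem_intrinsicInterior (convex_chamberCone _) (zero_mem_chamberCone _) hv hv0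
  intro y hy e he _
  exact eventually_atBot_add_smul_mem_chamber_of_opposite hs hu (mem_chamber_self hp) hd₀
    (h p (mem_chamber_self hp) d₀ hd₀ hd₀0) hy he

theorem stmt18 (ℓ n : ℕ)
    (a : Fin n → ((Fin ℓ → ℝ) →ₗ[ℝ] ℝ)) (b : Fin n → ℝ)
    (ha : ∀ i, a i ≠ 0)
    (Ω : Set (Fin ℓ → ℝ)) (hΩ : Ω = {x | ∀ i, a i x ≠ b i})
    (recCone : Set (Fin ℓ → ℝ) → Set (Fin ℓ → ℝ))
    (hrec : ∀ C, recCone C = {d | ∀ x ∈ C, ∀ t : ℝ, 0 ≤ t → x + t • d ∈ C})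
    (Opp : Set (Fin ℓ → ℝ) → Set (Fin ℓ → ℝ) → Prop)
    (hOpp : ∀ C D, Opp C D ↔ ∀ x ∈ C, ∀ d ∈ intrinsicInterior ℝ (recCone C), d ≠ 0 →
      ∀ᶠ t : ℝ in Filter.atBot, x + t • d ∈ D)
    (C D : Set (Fin ℓ → ℝ))
    (hC : ∃ x ∈ Ω, C = connectedComponentIn Ω x)
    (hD : ∃ x ∈ Ω, D = connectedComponentIn Ω x)
    (hunbC : ¬ Bornology.IsBounded C)
    (h : Opp C D) : Opp D C :=
  stmt18_general ℓ n a b Ω hΩ recCone hrec Opp hOpp C D hC hD hunbC h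
end
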